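/- Let v₀, v₁, ..., v_R be reals (R ≥ 1) all in an interval [m, M], and suppose v_{R-r*} = w for some 0 ≤ r* ≤ R-1. Define u = v₀/2^R + ∑_{r=0}^{R-1} v_{R-r}/2^(r+1). If R ≤ n, then m + (w - m)/2^n ≤ u ≤ M - (M - w)/2^n. -/

import Mathlib

/-!
The weights `1 / 2 ^ R` and `1 / 2 ^ (r + 1)` of the iterated average are nonnegative and sum
to `1`, so `u - m` is a nonnegative combination of the `v i - m` in which `w - m` carries weight
`1 / 2 ^ (r* + 1) ≥ 1 / 2 ^ n`. The upper bound is the same argument applied to the `M - v i`.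
-/

open Finset

noncomputable def halvingAverage (v : ℕ → ℝ) (R : ℕ) : ℝ :=
  v 0 / 2 ^ R + ∑ r ∈ range R, v (R - r) / 2 ^ (r + 1)

lemma halvingAverage_const (c : ℝ) (R : ℕ) : halvingAverage (fun _ => c) R = c := by
  induction R with
  | zero => simp [halvingAverage]
  | succ R ih =>
    rw [halvingAverage] at ih ⊢
    rw [sum_range_succ, pow_succ]
    linarith [show c / (2 ^ R * 2) + c / (2 ^ R * 2) = c / 2 ^ R by ring]

lemma halvingAverage_mul_add_const (v : ℕ → ℝ) (a b : ℝ) (R : ℕ) :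
    halvingAverage (fun i => a * v i + b) R = a * halvingAverage v R + b := by
  conv_rhs => rw [← halvingAverage_const b R]
  simp only [halvingAverage, add_div, mul_div_assoc, sum_add_distrib, ← mul_sum]
  ring

lemma div_two_pow_le_halvingAverage {v : ℕ → ℝ} {R r : ℕ} (hv : ∀ i ≤ R, 0 ≤ v i)
    (hr : r < R) : v (R - r) / 2 ^ (r + 1) ≤ halvingAverage v R := by
  have hsum : v (R - r) / 2 ^ (r + 1) ≤ ∑ r ∈ range R, v (R - r) / 2 ^ (r + 1) :=
    single_le_sum (f := fun r => v (R - r) / 2 ^ (r + 1))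
      (fun i _ => div_nonneg (hv _ (Nat.sub_le R i)) (by positivity)) (mem_range.2 hr)
  have h0 : 0 ≤ v 0 / 2 ^ R := div_nonneg (hv 0 (Nat.zero_le R)) (by positivity)
  rw [halvingAverage]
  linarith

lemma div_two_pow_le_halvingAverage_sub {v : ℕ → ℝ} {R r : ℕ} {m : ℝ}
    (hv : ∀ i ≤ R, m ≤ v i) (hr : r < R) :
    (v (R - r) - m) / 2 ^ (r + 1) ≤ halvingAverage v R - m := by
  have h := div_two_pow_le_halvingAverage (v := fun i => 1 * v i + -m)
    (fun i hi => by linarith [hv i hi]) hr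
  rwa [halvingAverage_mul_add_const, one_mul, one_mul, ← sub_eq_add_neg, ← sub_eq_add_neg] at h

lemma div_two_pow_le_sub_halvingAverage {v : ℕ → ℝ} {R r : ℕ} {M : ℝ}
    (hv : ∀ i ≤ R, v i ≤ M) (hr : r < R) :
    (M - v (R - r)) / 2 ^ (r + 1) ≤ M - halvingAverage v R := by
  have h := div_two_pow_le_halvingAverage (v := fun i => -1 * v i + M)
    (fun i hi => by linarith [hv i hi]) hr
  rwa [halvingAverage_mul_add_const, neg_one_mul, neg_one_mul, neg_add_eq_sub,
    neg_add_eq_sub] at h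

theorem stmt_12 (R n : ℕ) (hR : 1 ≤ R) (hRn : R ≤ n)
    (v : ℕ → ℝ) (m M w : ℝ)
    (hrange : ∀ i ≤ R, m ≤ v i ∧ v i ≤ M)
    (rstar : ℕ) (hrstar : rstar ≤ R - 1) (hw : v (R - rstar) = w)
    (u : ℝ)
    (hu : u = v 0 / 2 ^ R + ∑ r ∈ Finset.range R, v (R - r) / 2 ^ (r + 1)) :
    m + (w - m) / 2 ^ n ≤ u ∧ u ≤ M - (M - w) / 2 ^ n := by
  have hr : rstar < R := by omega
  have hwm : m ≤ w := hw ▸ (hrange _ (Nat.sub_le R rstar)).1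
  have hwM : w ≤ M := hw ▸ (hrange _ (Nat.sub_le R rstar)).2
  have hpow : (2 : ℝ) ^ (rstar + 1) ≤ 2 ^ n := pow_le_pow_right₀ one_le_two (by omega)
  have hlow := div_two_pow_le_halvingAverage_sub (fun i hi => (hrange i hi).1) hr
  have hup := div_two_pow_le_sub_halvingAverage (fun i hi => (hrange i hi).2) hr
  rw [hw] at hlow hup
  rw [show u = halvingAverage v R from hu]
  have hdivw : (w - m) / 2 ^ n ≤ (w - m) / 2 ^ (rstar + 1) :=
    div_le_div_of_nonneg_left (sub_nonneg.2 hwm) (by positivity) hpow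
  have hdivM : (M - w) / 2 ^ n ≤ (M - w) / 2 ^ (rstar + 1) :=
    div_le_div_of_nonneg_left (sub_nonneg.2 hwM) (by positivity) hpow
  constructor <;> linarith
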